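/- Let θ : ℝ → ℝ be smooth, v ∈ ℝ³ with ‖v‖ = 1, t₀ ∈ ℝ, and φ : ℝ → ℝ³ smooth with ‖φ'(t)‖ = 1 and ⟨v, φ'(t)⟩ = 0 for all t. Define x : ℝ² → ℝ × ℝ³ = ℝ⁴ by x(s,t) = ( ∫_{s₀}^{s} cos θ(τ) dτ , (∫_{s₀}^{s} sin θ(τ) dτ)·v + t₀·φ(t) ). Then for all (s,t): ‖x_s‖ = 1, ⟨x_s, x_t⟩ = 0, ‖x_t‖ = |t₀|, ⟨k, x_s⟩ = cos θ(s) and ⟨k, x_t⟩ = 0 where k = (1,0,0,0), and x_st = 0; in particular x_st is tangent to the surface, so the tangential component of k is a principal direction of every shape operator. -/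

import Mathlib

open scoped RealInnerProductSpace

noncomputable section

/-- `ℝ⁴` viewed as the L²-product `ℝ × ℝ³`. -/
abbrev E4 : Type := WithLp 2 (ℝ × EuclideanSpace ℝ (Fin 3))

/-- The point of `ℝ × ℝ³ = ℝ⁴` with first component `a` and second component `b`. -/
def mk4 (a : ℝ) (b : EuclideanSpace ℝ (Fin 3)) : E4 :=
  (WithLp.equiv 2 (ℝ × EuclideanSpace ℝ (Fin 3))).symm (a, b)

lemma mk4_inner (a c : ℝ) (b d : EuclideanSpace ℝ (Fin 3)) :
    ⟪mk4 a b, mk4 c d⟫ = a * c + ⟪b, d⟫ := by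
  rw [WithLp.prod_inner_apply]
  change ⟪a, c⟫ + ⟪b, d⟫ = _
  simp [mul_comm]

lemma hasDerivAt_mk4 {f : ℝ → ℝ} {g : ℝ → EuclideanSpace ℝ (Fin 3)} {f' : ℝ} {g'} {s : ℝ}
    (hf : HasDerivAt f f' s) (hg : HasDerivAt g g' s) :
    HasDerivAt (fun σ => mk4 (f σ) (g σ)) (mk4 f' g') s := by
  exact ((WithLp.prodContinuousLinearEquiv 2 ℝ ℝ
      (EuclideanSpace ℝ (Fin 3))).symm.toContinuousLinearMap.hasFDerivAt.comp_hasDerivAt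
      s (hf.prodMk hg))

/-- For the flat parametrization
`x (s,t) = (∫_{s₀}^s cos θ, (∫_{s₀}^s sin θ) • v + t₀ • φ t)` with `‖v‖ = 1`,
`‖φ'‖ = 1` and `⟪v, φ'⟫ = 0`: `‖x_s‖ = 1`, `⟪x_s, x_t⟫ = 0`, `‖x_t‖ = |t₀|`,
`⟪k, x_s⟫ = cos (θ s)` and `⟪k, x_t⟫ = 0` for `k = (1,0,0,0)`, and `x_st = 0`;
in particular `x_st` is tangent to the surface. -/
theorem stmt_8 (θ : ℝ → ℝ) (v : EuclideanSpace ℝ (Fin 3))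
    (φ : ℝ → EuclideanSpace ℝ (Fin 3)) (s₀ t₀ : ℝ)
    (hθ : ContDiff ℝ (⊤ : ℕ∞) θ) (hv : ‖v‖ = 1) (hφ : ContDiff ℝ (⊤ : ℕ∞) φ)
    (hφ'1 : ∀ t, ‖deriv φ t‖ = 1) (hvφ : ∀ t, ⟪v, deriv φ t⟫ = 0)
    (x : ℝ → ℝ → E4)
    (hx : ∀ s t, x s t = mk4 (∫ τ in s₀..s, Real.cos (θ τ))
        ((∫ τ in s₀..s, Real.sin (θ τ)) • v + t₀ • φ t)) :
    ∀ s t,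
      ‖deriv (fun σ => x σ t) s‖ = 1 ∧
      ⟪deriv (fun σ => x σ t) s, deriv (fun τ => x s τ) t⟫ = 0 ∧
      ‖deriv (fun τ => x s τ) t‖ = |t₀| ∧
      ⟪mk4 1 0, deriv (fun σ => x σ t) s⟫ = Real.cos (θ s) ∧
      ⟪mk4 1 0, deriv (fun τ => x s τ) t⟫ = 0 ∧
      deriv (fun σ => deriv (fun τ => x σ τ) t) s = 0 := by
  have hcos : Continuous fun τ => Real.cos (θ τ) :=
    Real.continuous_cos.comp (hθ.continuous)
  have hsin : Continuous fun τ => Real.sin (θ τ) :=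
    Real.continuous_sin.comp (hθ.continuous)
  -- derivative in s
  have hS : ∀ s t, HasDerivAt (fun σ => x σ t)
      (mk4 (Real.cos (θ s)) (Real.sin (θ s) • v)) s := by
    intro s t
    have hF : HasDerivAt (fun σ => ∫ τ in s₀..σ, Real.cos (θ τ)) (Real.cos (θ s)) s :=
      (hcos.integral_hasStrictDerivAt s₀ s).hasDerivAt
    have hG : HasDerivAt (fun σ => ∫ τ in s₀..σ, Real.sin (θ τ)) (Real.sin (θ s)) s :=
      (hsin.integral_hasStrictDerivAt s₀ s).hasDerivAt
    have : HasDerivAt (fun σ => mk4 (∫ τ in s₀..σ, Real.cos (θ τ))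
        ((∫ τ in s₀..σ, Real.sin (θ τ)) • v + t₀ • φ t))
        (mk4 (Real.cos (θ s)) (Real.sin (θ s) • v)) s :=
      hasDerivAt_mk4 hF ((hG.smul_const v).add_const _)
    simpa [funext fun σ => hx σ t] using this
  -- derivative in t
  have hT : ∀ s t, HasDerivAt (fun τ => x s τ) (mk4 0 (t₀ • deriv φ t)) t := by
    intro s t
    have hφd : HasDerivAt φ (deriv φ t) t :=
      ((hφ.differentiable (by simp)) t).hasDerivAt
    have : HasDerivAt (fun τ => mk4 (∫ τ in s₀..s, Real.cos (θ τ))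
        ((∫ τ in s₀..s, Real.sin (θ τ)) • v + t₀ • φ τ))
        (mk4 0 (t₀ • deriv φ t)) t :=
      hasDerivAt_mk4 (hasDerivAt_const _ _) ((hφd.const_smul t₀).const_add _)
    simpa [funext fun τ => hx s τ] using this
  intro s t
  have hSd : deriv (fun σ => x σ t) s = mk4 (Real.cos (θ s)) (Real.sin (θ s) • v) :=
    (hS s t).deriv
  have hTd : ∀ s t, deriv (fun τ => x s τ) t = mk4 0 (t₀ • deriv φ t) :=
    fun s t => (hT s t).deriv
  have hv2 : ⟪v, v⟫ = 1 := by
    rw [real_inner_self_eq_norm_sq, hv]; norm_num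
  have hφ2 : ⟪deriv φ t, deriv φ t⟫ = 1 := by
    rw [real_inner_self_eq_norm_sq, hφ'1]; norm_num
  refine ⟨?_, ?_, ?_, ?_, ?_, ?_⟩
  · rw [hSd, norm_eq_sqrt_real_inner, mk4_inner, real_inner_smul_left,
      real_inner_smul_right, hv2]
    rw [show Real.cos (θ s) * Real.cos (θ s)
        + Real.sin (θ s) * (Real.sin (θ s) * 1) = 1 by
      have := Real.sin_sq_add_cos_sq (θ s); nlinarith [this]]
    exact Real.sqrt_one
  · rw [hSd, hTd, mk4_inner, real_inner_smul_left, real_inner_smul_right, hvφ]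
    ring
  · rw [hTd, norm_eq_sqrt_real_inner, mk4_inner, real_inner_smul_left,
      real_inner_smul_right, hφ2]
    rw [show (0:ℝ) * 0 + t₀ * (t₀ * 1) = t₀ ^ 2 by ring, Real.sqrt_sq_eq_abs]
  · rw [hSd, mk4_inner]
    simp
  · rw [hTd, mk4_inner]
    simp
  · have : (fun σ => deriv (fun τ => x σ τ) t) = fun _ => mk4 0 (t₀ • deriv φ t) :=
      funext fun σ => hTd σ t
    rw [this, deriv_const]

end
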